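/- arXiv:1202.3101 — 2 statements merged into one kernel-verified Lean document; each statement's English description precedes it below -/
import Mathlib

section
/- Let b = Γ↷^b(X,μ) be a measure preserving action of a countable group Γ, let α_0,…,α_{n−1} be nonnegative reals summing to 1, and let d = ι_{η_α}×b = Σ_{i<n} α_i b. Then for every compact Polish space K, E(d,K) ⊆ co E(b,K) ⊆ E(ι×b, K), where co denotes convex hull in M_s(K^Γ). -/
open scoped NNReal ENNReal

/-- A measure preserving action of a group `Γ` on a standard probability space. -/
structure MPAction (Γ : Type) [Group Γ] where
  X : Type
  [mX : MeasurableSpace X]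
  [sb : StandardBorelSpace X]
  μ : MeasureTheory.Measure X
  [prob : MeasureTheory.IsProbabilityMeasure μ]
  act : Γ → X → X
  one_act : ∀ x, act 1 x = x
  mul_act : ∀ γ δ x, act (γ * δ) x = act γ (act δ x)
  pres : ∀ γ : Γ, MeasureTheory.MeasurePreserving (act γ) μ μ

attribute [instance] MPAction.mX MPAction.sb MPAction.prob

open MeasureTheory Topology Filter

variable {Γ : Type} [Group Γ]

/-- A finite Borel partition of a space. -/
def IsPartition {X : Type} [MeasurableSpace X] {k : ℕ} (A : Fin k → Set X) : Prop :=
  (∀ i, MeasurableSet (A i)) ∧ (∀ i j, i ≠ j → Disjoint (A i) (A j)) ∧ (⋃ i, A i) = Set.univ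

/-- Weak containment of a measure preserving action in an action on a (possibly
nonstandard) measure space, expressed at the level of the underlying data. -/
def WCgen {X Y : Type} [MeasurableSpace X] [MeasurableSpace Y]
    (actA : Γ → X → X) (μ : Measure X) (actB : Γ → Y → Y) (ν : Measure Y) : Prop :=
  ∀ (k : ℕ) (A : Fin k → Set X), IsPartition A →
    ∀ (F : Finset Γ) (ε : ℝ), 0 < ε →
      ∃ B : Fin k → Set Y, IsPartition B ∧
        ∀ γ ∈ F, ∀ i j : Fin k,
          |(μ (actA γ '' A i ∩ A j)).toReal - (ν (actB γ '' B i ∩ B j)).toReal| < ε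

/-- Weak containment `a ≺ b` of measure preserving actions. -/
def MPAction.WC (a b : MPAction Γ) : Prop := WCgen a.act a.μ b.act b.μ

/-- Weak equivalence `a ∼ b` of measure preserving actions. -/
def MPAction.WE (a b : MPAction Γ) : Prop := a.WC b ∧ b.WC a

/-- The diagonal product of two measure preserving actions. -/
noncomputable def MPAction.prod (a b : MPAction Γ) : MPAction Γ where
  X := a.X × b.X
  μ := a.μ.prod b.μ
  act γ p := (a.act γ p.1, b.act γ p.2)
  one_act p := by cases p with | mk x y => simp [a.one_act, b.one_act]
  mul_act γ δ p := by cases p with | mk x y => simp [a.mul_act, b.mul_act]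
  pres γ := (a.pres γ).prod (b.pres γ)

/-- The trivial (identity) action of `Γ` on a standard probability space `(Z, η)`. -/
def trivialAction (Γ : Type) [Group Γ] (Z : Type) [MeasurableSpace Z] [StandardBorelSpace Z]
    (η : Measure Z) [IsProbabilityMeasure η] : MPAction Γ where
  X := Z
  μ := η
  act _ z := z
  one_act _ := rfl
  mul_act _ _ _ := rfl
  pres _ := MeasurePreserving.id η

/-- Ergodicity: every invariant Borel set is null or conull. -/
def MPAction.IsErgodic (a : MPAction Γ) : Prop :=
  ∀ A : Set a.X, MeasurableSet A → (∀ γ : Γ, a.act γ ⁻¹' A = A) → a.μ A = 0 ∨ a.μ A = 1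

/-- Freeness: for every nonidentity group element, the set of fixed points is null. -/
def MPAction.IsFree (a : MPAction Γ) : Prop :=
  ∀ γ : Γ, γ ≠ 1 → a.μ {x | a.act γ x = x} = 0

/-- Strong ergodicity: every asymptotically invariant sequence of Borel sets is trivial. -/
def MPAction.IsStronglyErgodic (b : MPAction Γ) : Prop :=
  ∀ B : ℕ → Set b.X, (∀ n, MeasurableSet (B n)) →
    (∀ γ : Γ, Tendsto (fun n => (b.μ (symmDiff (b.act γ '' B n) (B n))).toReal) atTop (nhds 0)) →
    Tendsto (fun n => (b.μ (B n)).toReal * (1 - (b.μ (B n)).toReal)) atTop (nhds 0)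

/-- Stable weak containment: `a ≺ ι × b` where `ι` is the trivial action on a standard
non-atomic probability space. -/
def MPAction.SWC (a b : MPAction Γ) : Prop :=
  ∀ (Z : Type) [MeasurableSpace Z] [StandardBorelSpace Z] (η : Measure Z)
    [IsProbabilityMeasure η] [NullSingletonClass η],
    a.WC ((trivialAction Γ Z η).prod b)

/-- Stable weak equivalence. -/
def MPAction.SWE (a b : MPAction Γ) : Prop := a.SWC b ∧ b.SWC a

/-- Amenability: existence of a left-invariant finitely additive probability measure on
all subsets of the group. -/
def IsAmenable (Γ : Type) [Group Γ] : Prop :=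
  ∃ m : Set Γ → ℝ, (∀ A, 0 ≤ m A) ∧ m Set.univ = 1 ∧
    (∀ A B : Set Γ, Disjoint A B → m (A ∪ B) = m A + m B) ∧
    (∀ (γ : Γ) (A : Set Γ), m ((γ * ·) '' A) = m A)
open MeasureTheory Topology Filter

/-- The shift action of `Γ` on `K ^ Γ`. -/
def shiftMap (Γ : Type) [Group Γ] (K : Type) (γ : Γ) : (Γ → K) → (Γ → K) :=
  fun f δ => f (γ⁻¹ * δ)

/-- The itinerary map `Φ^{φ,a} : X → K^Γ` associated to an observable `φ : X → K`. -/
def itinMap {Γ : Type} [Group Γ] (a : MPAction Γ) (K : Type) (φ : a.X → K) : a.X → (Γ → K) :=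
  fun x γ => φ (a.act γ⁻¹ x)

/-- `E(a, K)`: the set of shift-invariant measures on `K^Γ` arising as pushforwards of the
measure of `a` under itinerary maps; equivalently, the shift-invariant factors of `a`. -/
def actE {Γ : Type} [Group Γ] (a : MPAction Γ) (K : Type) [MeasurableSpace K] :
    Set (ProbabilityMeasure (Γ → K)) :=
  {ν | ∃ φ : a.X → K, Measurable φ ∧
    (ν : Measure (Γ → K)) = Measure.map (itinMap a K φ) a.μ}

/-- The convex hull (set of finite convex combinations) of a set of probability measures. -/
def convexCombos {Ω : Type} [MeasurableSpace Ω] (E : Set (ProbabilityMeasure Ω)) :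
    Set (ProbabilityMeasure Ω) :=
  {ν | ∃ (n : ℕ) (w : Fin n → NNReal) (μs : Fin n → ProbabilityMeasure Ω),
      (∑ i, w i) = 1 ∧ (∀ i, μs i ∈ E) ∧
      (ν : Measure Ω) = ∑ i, (w i : ENNReal) • (μs i : Measure Ω)}

/-- Weak containment for sets of measure preserving actions. -/
def SetWC {Γ : Type} [Group Γ] (𝒜 ℬ : Set (MPAction Γ)) : Prop :=
  ∀ a ∈ 𝒜, ∀ (k : ℕ) (P : Fin k → Set a.X), IsPartition P →
    ∀ (F : Finset Γ) (ε : ℝ), 0 < ε →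
      ∃ b ∈ ℬ, ∃ Q : Fin k → Set b.X, IsPartition Q ∧
        ∀ γ ∈ F, ∀ i j : Fin k,
          |(a.μ (a.act γ '' P i ∩ P j)).toReal - (b.μ (b.act γ '' Q i ∩ Q j)).toReal| < ε

/-- Weak equivalence for sets of measure preserving actions. -/
def SetWE {Γ : Type} [Group Γ] (𝒜 ℬ : Set (MPAction Γ)) : Prop := SetWC 𝒜 ℬ ∧ SetWC ℬ 𝒜

open MeasureTheory Topology Filter

/-- The discrete probability measure on `Fin n` with weights `α`. -/
noncomputable def discreteMeasure {n : ℕ} (α : Fin n → NNReal) : Measure (Fin n) :=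
  ∑ i, (α i : ENNReal) • Measure.dirac i

lemma discreteMeasure_isProbability {n : ℕ} (α : Fin n → NNReal) (hα : ∑ i, α i = 1) :
    IsProbabilityMeasure (discreteMeasure α) := by
  constructor
  simp only [discreteMeasure, Measure.finset_sum_apply, Measure.smul_apply, smul_eq_mul,
    Measure.dirac_apply_of_mem (Set.mem_univ _), mul_one]
  rw [← ENNReal.coe_finset_sum, hα, ENNReal.coe_one]

/-- The convex combination `Σ_{i<n} α_i b = ι_{η_α} × b` of `n` copies of `b`. -/
noncomputable def convexSumAction {Γ : Type} [Group Γ] (b : MPAction Γ) {n : ℕ}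
    (α : Fin n → NNReal) (hα : ∑ i, α i = 1) : MPAction Γ :=
  haveI := discreteMeasure_isProbability α hα
  (trivialAction Γ (Fin n) (discreteMeasure α)).prod b

lemma uniformSum (n : ℕ) (hn : 0 < n) : (∑ _i : Fin n, ((n : NNReal))⁻¹) = 1 := by
  simp only [Finset.sum_const, Finset.card_univ, Fintype.card_fin, nsmul_eq_mul]
  rw [mul_inv_cancel₀]
  exact_mod_cast hn.ne'

/-- The set of actions `ι_{η_{α(n)}} × b` for uniform weights `α(n) = (1/n, …, 1/n)`. -/
noncomputable def uniformConvexSums {Γ : Type} [Group Γ] (b : MPAction Γ) : Set (MPAction Γ) :=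
  {d | ∃ (n : ℕ) (hn : 0 < n),
    d = convexSumAction b (fun _ : Fin n => ((n : NNReal))⁻¹) (uniformSum n hn)}

/-- The set of actions `ι_{η_α} × b` over all finite convex weights `α`. -/
noncomputable def allConvexSums {Γ : Type} [Group Γ] (b : MPAction Γ) : Set (MPAction Γ) :=
  {d | ∃ (n : ℕ) (_ : 1 ≤ n) (α : Fin n → NNReal) (hα : ∑ i, α i = 1),
    d = convexSumAction b α hα}

/-!
Disintegrating `η_α × μ` over the first coordinate writes the itinerary measure of an observable
of `Σ α_i b` as `Σ α_i` times the itinerary measures of its sections, which are observables of `b`.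
Conversely, gluing observables `φ_i` of `b` into one observable of `Σ w_i b` realises any convex
combination `Σ w_i ν_i` of elements of `E(b, K)` in `E(Σ w_i b, K)`. Finally `Σ w_i b` is a factor
of `ι × b`: as `η` is atomless, `t ↦ η(f⁻¹(-∞, t])` is continuous for a Borel embedding
`f : Z → ℝ`, so the intermediate value theorem yields a Borel `g : Z → Fin m` with `g_* η = η_w`,
and `(z, x) ↦ (g z, x)` is an equivariant measure preserving map; observables pull back along
factor maps.
-/

open Set

lemma continuous_measureReal_Iic (ν : Measure ℝ) [IsFiniteMeasure ν] [NullSingletonClass ν] :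
    Continuous fun t => ν.real (Iic t) := by
  refine continuous_iff_continuousAt.2 fun b => ?_
  have hIcc : Tendsto (fun t => ν.real (Icc (b - dist t b) (b + dist t b))) (𝓝 b) (𝓝 0) := by
    have h := (tendsto_measure_Icc ν b).comp
      ((continuous_id.dist continuous_const).tendsto' b 0 (dist_self b))
    exact (ENNReal.tendsto_toReal ENNReal.zero_ne_top).comp h
  have hIoc : ∀ {s u : ℝ}, s ≤ u → dist (ν.real (Iic s)) (ν.real (Iic u)) = ν.real (Ioc s u) := by
    intro s u h
    have hsub : Iic s ⊆ Iic u := Iic_subset_Iic.2 h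
    rw [dist_comm, Real.dist_eq, abs_of_nonneg (sub_nonneg.2 (measureReal_mono hsub)),
      ← measureReal_sdiff hsub measurableSet_Iic, Iic_sdiff_Iic]
  refine tendsto_iff_dist_tendsto_zero.2 (squeeze_zero (fun _ => dist_nonneg) (fun t => ?_) hIcc)
  have h₁ : b - dist t b ≤ t := by rw [Real.dist_eq]; linarith [neg_abs_le (t - b)]
  have h₂ : t ≤ b + dist t b := by rw [Real.dist_eq]; linarith [le_abs_self (t - b)]
  dsimp only
  rcases le_total t b with h | h
  · rw [hIoc h]
    exact measureReal_mono (Ioc_subset_Icc_self.trans (Icc_subset_Icc h₁ (by linarith)))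
  · rw [dist_comm, hIoc h]
    exact measureReal_mono (Ioc_subset_Icc_self.trans (Icc_subset_Icc (by linarith) h₂))

lemma exists_measure_Iic_eq (ν : Measure ℝ) [IsFiniteMeasure ν] [NullSingletonClass ν]
    {r : ℝ≥0∞} (hr₀ : 0 < r) (hr : r < ν univ) : ∃ t, ν (Iic t) = r := by
  have hcont : Continuous fun t => ν (Iic t) := by
    convert ENNReal.continuous_ofReal.comp (continuous_measureReal_Iic ν) with t
    simp
  have hbot : Tendsto (fun t => ν (Iic t)) atBot (𝓝 0) := by
    have hempty : ⋂ t : ℝ, Iic t = ∅ := iInter_Iic_eq_empty_iff.2 (by simp)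
    have h := tendsto_measure_iInter_atBot (μ := ν)
      (fun t => measurableSet_Iic.nullMeasurableSet) monotone_Iic ⟨0, measure_ne_top ν _⟩
    rwa [hempty, measure_empty] at h
  obtain ⟨a, ha⟩ := (hbot.eventually (gt_mem_nhds hr₀)).exists
  obtain ⟨b, hb⟩ := ((tendsto_measure_Iic_atTop ν).eventually (lt_mem_nhds hr)).exists
  exact mem_range_of_exists_le_of_exists_ge hcont ⟨a, ha.le⟩ ⟨b, hb.le⟩

lemma exists_measurableSet_measure_eq {Z : Type*} [MeasurableSpace Z] [StandardBorelSpace Z]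
    (η : Measure Z) [IsFiniteMeasure η] [NullSingletonClass η] {r : ℝ≥0∞} (hr : r ≤ η univ) :
    ∃ A, MeasurableSet A ∧ η A = r := by
  rcases eq_or_ne r 0 with rfl | hr₀
  · exact ⟨∅, MeasurableSet.empty, measure_empty⟩
  rcases hr.eq_or_lt with rfl | hr
  · exact ⟨univ, MeasurableSet.univ, rfl⟩
  obtain ⟨f, hf⟩ := exists_measurableEmbedding_real Z
  have : NullSingletonClass (η.map f) := ⟨fun x => by
    rw [hf.map_apply]
    exact (subsingleton_singleton.preimage hf.injective).measure_zero η⟩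
  obtain ⟨t, ht⟩ := exists_measure_Iic_eq (η.map f) (pos_iff_ne_zero.2 hr₀)
    (by rwa [hf.map_apply, preimage_univ])
  exact ⟨f ⁻¹' Iic t, hf.measurable measurableSet_Iic, by rwa [hf.map_apply] at ht⟩

lemma exists_measurable_map_eq_sum_dirac {Z : Type*} [MeasurableSpace Z] [StandardBorelSpace Z]
    (η : Measure Z) [IsFiniteMeasure η] [NullSingletonClass η] {m : ℕ} (w : Fin (m + 1) → ℝ≥0∞)
    (hw : ∑ i, w i = η univ) :
    ∃ g : Z → Fin (m + 1), Measurable g ∧ η.map g = ∑ i, w i • Measure.dirac i := by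
  induction m generalizing η with
  | zero => exact ⟨fun _ => 0, measurable_const, by simp [Measure.map_const, ← hw]⟩
  | succ m ih =>
    rw [Fin.sum_univ_succ] at hw
    obtain ⟨A, hA, hηA⟩ := exists_measurableSet_measure_eq η (hw ▸ le_self_add)
    have hηAc : ∑ i : Fin (m + 1), w i.succ = η.restrict Aᶜ univ := by
      rw [Measure.restrict_apply_univ, measure_compl hA (measure_ne_top η A), hηA, ← hw,
        ENNReal.add_sub_cancel_left (hηA ▸ measure_ne_top η A)]
    obtain ⟨g, hg, hgη⟩ := ih (η.restrict Aᶜ) (fun i => w i.succ) hηAc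
    classical
    have hsucc : Measurable (Fin.succ ∘ g) := (measurable_of_countable _).comp hg
    refine ⟨A.piecewise (fun _ => 0) (Fin.succ ∘ g), measurable_const.piecewise hA hsucc, ?_⟩
    rw [← Measure.restrict_add_restrict_compl (μ := η) hA,
      Measure.map_add _ _ (measurable_const.piecewise hA hsucc),
      Measure.map_congr (piecewise_ae_eq_restrict hA),
      Measure.map_congr (piecewise_ae_eq_restrict_compl hA), Measure.map_const,
      ← Measure.map_map (measurable_of_countable _) hg, hgη,
      Measure.map_finset_sum' (measurable_of_countable _).aemeasurable,
      Measure.restrict_apply_univ, hηA, Fin.sum_univ_succ (f := fun i => w i • Measure.dirac i)]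
    simp [Measure.map_smul, Measure.map_dirac]

lemma map_discreteMeasure_prod {n : ℕ} (α : Fin n → ℝ≥0) {Y W : Type*}
    [MeasurableSpace Y] [MeasurableSpace W] (μ : Measure Y) [SFinite μ] {F : Fin n × Y → W}
    (hF : Measurable F) :
    ((discreteMeasure α).prod μ).map F = ∑ i, (α i : ℝ≥0∞) • μ.map fun y => F (i, y) := by
  rw [discreteMeasure, ← Measure.sum_fintype, Measure.prod_sum_left,
    Measure.map_sum hF.aemeasurable, Measure.sum_fintype]
  refine Finset.sum_congr rfl fun i _ => ?_
  rw [Measure.prod_smul_left, Measure.map_smul, Measure.dirac_prod,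
    Measure.map_map hF measurable_prodMk_left]
  rfl

lemma measurable_itinMap (a : MPAction Γ) (K : Type) [MeasurableSpace K] {φ : a.X → K}
    (hφ : Measurable φ) : Measurable (itinMap a K φ) :=
  measurable_pi_lambda _ fun γ => hφ.comp (a.pres γ⁻¹).measurable

lemma actE_subset_of_factor {a c : MPAction Γ} (π : a.X → c.X) (hπ : Measurable π)
    (hπμ : a.μ.map π = c.μ) (hπact : ∀ γ x, π (a.act γ x) = c.act γ (π x))
    (K : Type) [MeasurableSpace K] : actE c K ⊆ actE a K := by
  rintro ν ⟨φ, hφ, hν⟩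
  refine ⟨φ ∘ π, hφ.comp hπ, ?_⟩
  have hitin : itinMap a K (φ ∘ π) = itinMap c K φ ∘ π := by
    funext x γ
    exact congrArg φ (hπact γ⁻¹ x)
  rw [hν, hitin, ← Measure.map_map (measurable_itinMap c K hφ) hπ, hπμ]

section ConvexSums

variable (b : MPAction Γ) (K : Type) [MeasurableSpace K]

lemma map_itinMap_convexSumAction {n : ℕ} (α : Fin n → ℝ≥0) (hα : ∑ i, α i = 1)
    {φ : Fin n × b.X → K} (hφ : Measurable φ) :
    (convexSumAction b α hα).μ.map (itinMap _ K φ) =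
      ∑ i, (α i : ℝ≥0∞) • b.μ.map (itinMap b K fun x => φ (i, x)) :=
  map_discreteMeasure_prod α b.μ (measurable_itinMap (convexSumAction b α hα) K hφ)

lemma actE_convexSumAction_subset {n : ℕ} (α : Fin n → ℝ≥0) (hα : ∑ i, α i = 1) :
    actE (convexSumAction b α hα) K ⊆ convexCombos (actE b K) := by
  rintro ν ⟨φ, hφ, hν⟩
  have hφi : ∀ i, Measurable fun x => φ (i, x) := fun i => hφ.comp measurable_prodMk_left
  refine ⟨n, α, fun i => ⟨b.μ.map (itinMap b K fun x => φ (i, x)),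
    Measure.isProbabilityMeasure_map (measurable_itinMap b K (hφi i)).aemeasurable⟩, hα,
    fun i => ⟨_, hφi i, rfl⟩, ?_⟩
  rw [hν, map_itinMap_convexSumAction b K α hα hφ]
  rfl

lemma mem_actE_convexSumAction {m : ℕ} (w : Fin m → ℝ≥0) (hw : ∑ i, w i = 1)
    {μs : Fin m → ProbabilityMeasure (Γ → K)} (hμs : ∀ i, μs i ∈ actE b K)
    {ν : ProbabilityMeasure (Γ → K)}
    (hν : (ν : Measure (Γ → K)) = ∑ i, (w i : ℝ≥0∞) • (μs i : Measure (Γ → K))) :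
    ν ∈ actE (convexSumAction b w hw) K := by
  choose φ hφ hφμ using hμs
  have hglue : Measurable fun p : Fin m × b.X => φ p.1 p.2 :=
    measurable_from_prod_countable_right hφ
  refine ⟨_, hglue, ?_⟩
  rw [hν, map_itinMap_convexSumAction b K w hw hglue]
  simp only [hφμ]

lemma actE_convexSumAction_subset_prod {m : ℕ} (w : Fin m → ℝ≥0) (hw : ∑ i, w i = 1)
    {Z : Type} [MeasurableSpace Z] [StandardBorelSpace Z] (η : Measure Z)
    [IsProbabilityMeasure η] [NullSingletonClass η] :
    actE (convexSumAction b w hw) K ⊆ actE ((trivialAction Γ Z η).prod b) K := by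
  cases m with
  | zero => simp at hw
  | succ m =>
    obtain ⟨g, hg, hgη⟩ := exists_measurable_map_eq_sum_dirac η (fun i => (w i : ℝ≥0∞))
      (by rw [measure_univ, ← ENNReal.ofNNReal_finsetSum, hw, ENNReal.coe_one])
    refine actE_subset_of_factor (Prod.map g id) (hg.prodMap measurable_id) ?_ (fun _ _ => rfl) K
    change (η.prod b.μ).map (Prod.map g id) = (discreteMeasure fun i => w i).prod b.μ
    rw [← Measure.map_prod_map _ _ hg measurable_id, hgη, Measure.map_id]
    rfl

end ConvexSums

theorem stmt9_general (Γ : Type) [Group Γ] (b : MPAction Γ)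
    (n : ℕ) (α : Fin n → NNReal) (hα : ∑ i, α i = 1)
    (Z : Type) [MeasurableSpace Z] [StandardBorelSpace Z] (η : Measure Z)
    [IsProbabilityMeasure η] [NullSingletonClass η] :
    ∀ (K : Type) [TopologicalSpace K] [CompactSpace K] [PolishSpace K]
      [MeasurableSpace K] [BorelSpace K],
      actE (convexSumAction b α hα) K ⊆ convexCombos (actE b K) ∧
      convexCombos (actE b K) ⊆ actE ((trivialAction Γ Z η).prod b) K := by
  intro K _ _ _ _ _
  refine ⟨actE_convexSumAction_subset b K α hα, ?_⟩
  rintro ν ⟨m, w, μs, hw, hμs, hν⟩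
  exact actE_convexSumAction_subset_prod b K w hw η (mem_actE_convexSumAction b K w hw hμs hν)

/-- **Lemma (Tucker-Drob, Lemma 3.1).** Let `b` be a measure preserving action of a
countable group `Γ`, let `α₀, …, α_{n-1}` be nonnegative reals summing to `1`, and let
`d = ι_{η_α} × b = Σ_{i<n} α_i b`.  Then for every compact Polish space `K`,
`E(d, K) ⊆ co E(b, K) ⊆ E(ι × b, K)`, where `co` denotes the convex hull in `M_s(K^Γ)`. -/
theorem stmt9 (Γ : Type) [Group Γ] [Countable Γ] (b : MPAction Γ)
    (n : ℕ) (α : Fin n → NNReal) (hα : ∑ i, α i = 1)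
    (Z : Type) [MeasurableSpace Z] [StandardBorelSpace Z] (η : Measure Z)
    [IsProbabilityMeasure η] [NullSingletonClass η] :
    ∀ (K : Type) [TopologicalSpace K] [CompactSpace K] [PolishSpace K]
      [MeasurableSpace K] [BorelSpace K],
      actE (convexSumAction b α hα) K ⊆ convexCombos (actE b K) ∧
      convexCombos (actE b K) ⊆ actE ((trivialAction Γ Z η).prod b) K :=
  stmt9_general Γ b n α hα Z η
end

section
/- Let d = Γ↷^d(Y,ν) be a measure preserving action of a countable group Γ, and suppose π:(Y,ν)→(Z,η) is a factor map from d onto an identity action Γ↷^{ι_η}(Z,η). Let ν = ∫_z ν_z dη be the disintegration of ν with respect to π, and let d_z = Γ↷^d(Y,ν_z). If a = Γ↷^a(X,μ) is an ergodic factor of d via a map φ:(Y,ν)→(X,μ), then for η-almost every z ∈ Z, a is a factor of d_z via the same map φ. -/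
open scoped NNReal ENNReal

open MeasureTheory Topology Filter

variable {Γ : Type} [Group Γ]

open MeasureTheory Topology Filter

/-- `a` is a factor of `d` via the map `φ`: `φ` is measurable, measure preserving and
almost everywhere equivariant. -/
def IsFactorVia {Γ : Type} [Group Γ] (d a : MPAction Γ) (φ : d.X → a.X) : Prop :=
  Measurable φ ∧ Measure.map φ d.μ = a.μ ∧
    ∀ γ : Γ, ∀ᵐ y ∂d.μ, φ (d.act γ y) = a.act γ (φ y)

/-- `νz` is the disintegration of the measure of `d` over `(Z, η)` with respect to the
map `π`: an (essentially unique) measurable family of Borel probability measures `νz z`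
with `νz z (π⁻¹{z}) = 1` a.e. and `d.μ = ∫ νz z dη`. -/
def IsDisintegration {Γ : Type} [Group Γ] (d : MPAction Γ) {Z : Type} [MeasurableSpace Z]
    (η : Measure Z) (π : d.X → Z) (νz : Z → Measure d.X) : Prop :=
  (∀ z, IsProbabilityMeasure (νz z)) ∧
  (∀ B : Set d.X, MeasurableSet B → Measurable fun z => νz z B) ∧
  (∀ᵐ z ∂η, νz z (π ⁻¹' {z}) = 1) ∧
  (∀ B : Set d.X, MeasurableSet B → d.μ B = ∫⁻ z, νz z B ∂η)

/-! For a `d`-invariant set `F`, the measure `φ_* (ν|F)` is `a`-invariant and dominated by `μ`,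
so ergodicity forces it to be `ν F • μ`: the factor `φ` is independent of the invariant sets
`π⁻¹ E`. Integrated against the disintegration this reads `η ⊗ (φ_* ν_z) = η ⊗ μ`, and two kernels
with the same composition-product with `η` agree `η`-a.e. Equivariance passes to `ν_z` because
a `ν`-null set is `ν_z`-null for `η`-a.e. `z`. -/

open ProbabilityTheory

namespace MPAction

variable [Countable Γ] {a : MPAction Γ}

theorem IsErgodic.ae_mem_or_ae_notMem (ha : a.IsErgodic) {s : Set a.X} (hs : MeasurableSet s)
    (hinv : ∀ γ, a.act γ ⁻¹' s =ᵐ[a.μ] s) :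
    (∀ᵐ x ∂a.μ, x ∈ s) ∨ ∀ᵐ x ∂a.μ, x ∉ s := by
  set t := ⋃ γ, a.act γ ⁻¹' s
  have ht : MeasurableSet t := .iUnion fun γ => (a.pres γ).measurable hs
  have hts : t =ᵐ[a.μ] s := by
    simpa only [Set.iUnion_const] using Filter.EventuallyEq.countable_iUnion hinv
  have ht_inv : ∀ δ, a.act δ ⁻¹' t = t := by
    intro δ
    have hcomp : ∀ γ, a.act δ ⁻¹' (a.act γ ⁻¹' s) = a.act (γ * δ) ⁻¹' s := fun γ => by
      ext x; simp [a.mul_act]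
    rw [Set.preimage_iUnion, Set.iUnion_congr hcomp,
      (Group.mulRight_bijective δ).surjective.iUnion_comp fun γ => a.act γ ⁻¹' s]
  rcases ha t ht ht_inv with h | h
  · right
    filter_upwards [measure_eq_zero_iff_ae_notMem.1 h, hts.mem_iff] with x hxt hx
    exact fun hxs => hxt (hx.2 hxs)
  · left
    have ht_ae : ∀ᵐ x ∂a.μ, x ∈ t := mem_ae_iff.2 ((prob_compl_eq_zero_iff ht).2 h)
    filter_upwards [ht_ae, hts.mem_iff] with x hxt hx
    exact hx.1 hxt

theorem IsErgodic.ae_eq_const_of_ae_eq_comp (ha : a.IsErgodic) {β : Type*} [MeasurableSpace β]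
    [Nonempty β] [MeasurableSpace.CountablySeparated β] {g : a.X → β} (hg : Measurable g)
    (hinv : ∀ γ, g ∘ a.act γ =ᵐ[a.μ] g) : ∃ c, g =ᵐ[a.μ] Function.const a.X c :=
  exists_eventuallyEq_const_of_forall_separating MeasurableSet fun U hU =>
    ha.ae_mem_or_ae_notMem (s := g ⁻¹' U) (hg hU) fun γ =>
      ((hinv γ).mono fun _ hx => Iff.of_eq (congrArg (· ∈ U) hx)).set_eq

theorem IsErgodic.eq_smul_of_absolutelyContinuous (ha : a.IsErgodic) {ρ : Measure a.X}
    [IsFiniteMeasure ρ] (hρ : ρ ≪ a.μ) (hinv : ∀ γ, MeasurePreserving (a.act γ) ρ ρ) :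
    ρ = ρ Set.univ • a.μ := by
  obtain ⟨c, hc⟩ := ha.ae_eq_const_of_ae_eq_comp (Measure.measurable_rnDeriv ρ a.μ)
    fun γ => (hinv γ).rnDeriv_comp_aeEq (a.pres γ)
  have hρc : ρ = c • a.μ := by
    rw [← Measure.withDensity_rnDeriv_eq ρ a.μ hρ, withDensity_congr_ae hc]
    exact withDensity_const c
  rw [hρc]
  simp

theorem IsErgodic.measure_preimage_inter_eq_mul (ha : a.IsErgodic) {d : MPAction Γ}
    {φ : d.X → a.X} (hφ : IsFactorVia d a φ) {F : Set d.X} (hF : MeasurableSet F)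
    (hFinv : ∀ γ, d.act γ ⁻¹' F =ᵐ[d.μ] F) {A : Set a.X} (hA : MeasurableSet A) :
    d.μ (φ ⁻¹' A ∩ F) = d.μ F * a.μ A := by
  obtain ⟨hφm, hφμ, hφeq⟩ := hφ
  set ρ := (d.μ.restrict F).map φ
  have hρle : ρ ≤ a.μ := hφμ ▸ Measure.map_mono Measure.restrict_le_self hφm
  have hρinv : ∀ γ, MeasurePreserving (a.act γ) ρ ρ := fun γ => by
    refine ⟨(a.pres γ).measurable, ?_⟩
    have hrestrict : (d.μ.restrict F).map (d.act γ) = d.μ.restrict F := by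
      simpa only [Measure.restrict_congr_set (hFinv γ)] using
        ((d.pres γ).restrict_preimage hF).map_eq
    calc ρ.map (a.act γ) = (d.μ.restrict F).map (a.act γ ∘ φ) :=
          Measure.map_map (a.pres γ).measurable hφm
      _ = (d.μ.restrict F).map (φ ∘ d.act γ) :=
          Measure.map_congr (ae_restrict_of_ae ((hφeq γ).mono fun _ hy => hy.symm))
      _ = ρ := by rw [← Measure.map_map hφm (d.pres γ).measurable, hrestrict]
  have : IsFiniteMeasure ρ := isFiniteMeasure_of_le a.μ hρle
  have hρA := congrArg (· A)
    (ha.eq_smul_of_absolutelyContinuous (Measure.absolutelyContinuous_of_le hρle) hρinv)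
  simpa [ρ, Measure.map_apply hφm hA, Measure.map_apply hφm MeasurableSet.univ,
    Measure.restrict_apply (hφm hA)] using hρA

end MPAction

theorem measure_inter_preimage_eq_indicator {Y Z : Type*} [MeasurableSpace Y] [MeasurableSpace Z]
    [MeasurableSingletonClass Z] {ν : Measure Y} [IsProbabilityMeasure ν] {π : Y → Z}
    (hπ : Measurable π) {z : Z} (hz : ν (π ⁻¹' {z}) = 1) (B : Set Y) (E : Set Z) :
    ν (B ∩ π ⁻¹' E) = E.indicator (fun _ => ν B) z := by
  have hnull : ν (π ⁻¹' {z})ᶜ = 0 := (prob_compl_eq_zero_iff (hπ (measurableSet_singleton z))).2 hz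
  by_cases hzE : z ∈ E
  · rw [Set.indicator_of_mem hzE]
    exact measure_inter_conull <| measure_mono_null
      (Set.compl_subset_compl.2 (Set.preimage_mono (Set.singleton_subset_iff.2 hzE))) hnull
  · rw [Set.indicator_of_notMem hzE]
    exact measure_mono_null (fun y hy (hyz : π y = z) => hzE (hyz ▸ hy.2)) hnull

namespace IsDisintegration

variable {d : MPAction Γ} {Z : Type} [MeasurableSpace Z] {η : Measure Z} {π : d.X → Z}
  {νz : Z → Measure d.X}

noncomputable def kernel (hdis : IsDisintegration d η π νz) : Kernel Z d.X :=
  ⟨νz, Measure.measurable_of_measurable_coe νz hdis.2.1⟩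

@[simp]
theorem kernel_apply (hdis : IsDisintegration d η π νz) (z : Z) : hdis.kernel z = νz z :=
  rfl

theorem isMarkovKernel_kernel (hdis : IsDisintegration d η π νz) : IsMarkovKernel hdis.kernel :=
  ⟨hdis.1⟩

theorem setLIntegral_eq (hdis : IsDisintegration d η π νz) [MeasurableSingletonClass Z]
    (hπ : Measurable π) {B : Set d.X} (hB : MeasurableSet B) {E : Set Z} (hE : MeasurableSet E) :
    ∫⁻ z in E, νz z B ∂η = d.μ (B ∩ π ⁻¹' E) := by
  rw [hdis.2.2.2 _ (hB.inter (hπ hE)), ← lintegral_indicator hE]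
  refine lintegral_congr_ae ?_
  filter_upwards [hdis.2.2.1] with z hz
  have := hdis.1 z
  exact (measure_inter_preimage_eq_indicator hπ hz B E).symm

theorem ae_ae_of_ae (hdis : IsDisintegration d η π νz) {p : d.X → Prop}
    (hp : MeasurableSet {y | p y}) (h : ∀ᵐ y ∂d.μ, p y) : ∀ᵐ z ∂η, ∀ᵐ y ∂νz z, p y := by
  have h0 : ∫⁻ z, νz z {y | p y}ᶜ ∂η = 0 := by
    rw [← hdis.2.2.2 _ hp.compl]
    exact h
  exact (lintegral_eq_zero_iff (hdis.2.1 _ hp.compl)).1 h0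

theorem ae_map_eq_of_isErgodic [Countable Γ] [StandardBorelSpace Z] [IsProbabilityMeasure η]
    (hdis : IsDisintegration d η π νz) (hπ : IsFactorVia d (trivialAction Γ Z η) π)
    {a : MPAction Γ} (ha : a.IsErgodic) {φ : d.X → a.X} (hφ : IsFactorVia d a φ) :
    ∀ᵐ z ∂η, (νz z).map φ = a.μ := by
  have := hdis.isMarkovKernel_kernel
  have := Kernel.IsMarkovKernel.map hdis.kernel hφ.1
  have hπm : Measurable π := hπ.1
  have hπη : d.μ.map π = η := hπ.2.1
  have hπinv : ∀ E, ∀ γ, d.act γ ⁻¹' (π ⁻¹' E) =ᵐ[d.μ] π ⁻¹' E := fun E γ =>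
    ((hπ.2.2 γ).mono fun y hy => by simp only [Set.mem_preimage, hy]; rfl).set_eq
  have hprod : η ⊗ₘ hdis.kernel.map φ = η ⊗ₘ Kernel.const Z a.μ := by
    rw [Measure.compProd_const]
    refine (Measure.prod_eq fun E A hE hA => ?_).symm
    rw [Measure.compProd_apply_prod hE hA]
    simp_rw [Kernel.map_apply _ hφ.1, kernel_apply, Measure.map_apply hφ.1 hA]
    rw [hdis.setLIntegral_eq hπm (hφ.1 hA) hE,
      ha.measure_preimage_inter_eq_mul hφ (hπm hE) (hπinv E) hA,
      ← Measure.map_apply hπm hE, hπη]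
  filter_upwards [Kernel.ae_eq_of_compProd_eq hprod] with z hz
  simpa [Kernel.map_apply _ hφ.1] using hz

end IsDisintegration

/-- **Proposition (Tucker-Drob, Proposition 2.1).** Let `d` be a measure preserving
action of a countable group `Γ`, let `π` be a factor map from `d` onto the identity
action on `(Z, η)`, and let `ν = ∫ ν_z dη` be the corresponding disintegration.  If the
ergodic action `a` is a factor of `d` via `φ`, then for `η`-almost every `z`, `a` is a
factor of `d_z = Γ ↷ (Y, ν_z)` via the same map `φ`. -/
theorem stmt11 (Γ : Type) [Group Γ] [Countable Γ]
    (d : MPAction Γ)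
    (Z : Type) [MeasurableSpace Z] [StandardBorelSpace Z] (η : Measure Z)
    [IsProbabilityMeasure η]
    (π : d.X → Z) (hπ : IsFactorVia d (trivialAction Γ Z η) π)
    (νz : Z → Measure d.X) (hdis : IsDisintegration d η π νz)
    (a : MPAction Γ) (ha : a.IsErgodic)
    (φ : d.X → a.X) (hφ : IsFactorVia d a φ) :
    ∀ᵐ z ∂η, Measure.map φ (νz z) = a.μ ∧
      ∀ γ : Γ, ∀ᵐ y ∂(νz z), φ (d.act γ y) = a.act γ (φ y) := by
  have hequiv : ∀ᵐ z ∂η, ∀ γ, ∀ᵐ y ∂νz z, φ (d.act γ y) = a.act γ (φ y) :=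
    ae_all_iff.2 fun γ => hdis.ae_ae_of_ae
      (measurableSet_eq_fun (hφ.1.comp (d.pres γ).measurable) ((a.pres γ).measurable.comp hφ.1))
      (hφ.2.2 γ)
  filter_upwards [hdis.ae_map_eq_of_isErgodic hπ ha hφ, hequiv] with z hmap hequiv_z
  exact ⟨hmap, hequiv_z⟩
end
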